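/- For the Laplace density f(x) = k(x) = (1/2)e^{−|x|} and 0 < a < b, for x ∈ [a,b] one has g(x) = f(x) − ∫_a^b k(x−y) f(y) dy = e^{−x} [ 3/8 + (1/8) e^{−2(b−x)} + (1/4)(a−x) ]. -/
import Mathlib


open MeasureTheory Real

/-- Laplace (bilateral exponential) test case: closed form of the forcing function `g`
for `0 < a ≤ x ≤ b`. -/
theorem laplace_forcing (a b x : ℝ) (ha : 0 < a) (hax : a ≤ x) (hxb : x ≤ b) :
    (1 / 2) * Real.exp (-|x|)
        - ∫ y in a..b, ((1 / 2) * Real.exp (-|x - y|)) * ((1 / 2) * Real.exp (-|y|))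
      = Real.exp (-x)
          * (3 / 8 + (1 / 8) * Real.exp (-2 * (b - x)) + (1 / 4) * (a - x)) := by
  have hx : 0 < x := lt_of_lt_of_le ha hax
  have hcont : Continuous fun y : ℝ => ((1 / 2) * Real.exp (-|x - y|)) * ((1 / 2) * Real.exp (-|y|)) := by
    continuity
  have hsplit :
      (∫ y in a..x, ((1 / 2) * Real.exp (-|x - y|)) * ((1 / 2) * Real.exp (-|y|)))
        + ∫ y in x..b, ((1 / 2) * Real.exp (-|x - y|)) * ((1 / 2) * Real.exp (-|y|))
      = ∫ y in a..b, ((1 / 2) * Real.exp (-|x - y|)) * ((1 / 2) * Real.exp (-|y|)) :=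
    intervalIntegral.integral_add_adjacent_intervals
      (hcont.intervalIntegrable _ _) (hcont.intervalIntegrable _ _)
  have h1 : (∫ y in a..x, ((1 / 2) * Real.exp (-|x - y|)) * ((1 / 2) * Real.exp (-|y|)))
      = (1 / 4) * Real.exp (-x) * (x - a) := by
    rw [intervalIntegral.integral_congr (g := fun _ : ℝ => (1 / 4) * Real.exp (-x))]
    · simp; ring
    · intro y hy
      simp only []
      rw [Set.uIcc_of_le hax] at hy
      have h1 : |x - y| = x - y := abs_of_nonneg (by linarith [hy.2])
      have h2 : |y| = y := abs_of_nonneg (by linarith [hy.1])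
      rw [h1, h2, show -(x - y) = -x + y by ring, Real.exp_add, Real.exp_neg y]
      field_simp
      ring
  have h2 : (∫ y in x..b, ((1 / 2) * Real.exp (-|x - y|)) * ((1 / 2) * Real.exp (-|y|)))
      = (1 / 8) * Real.exp (-x) - (1 / 8) * Real.exp (x - 2 * b) := by
    rw [intervalIntegral.integral_congr (g := fun y : ℝ => (1 / 4) * Real.exp x * Real.exp (-2 * y))]
    · rw [intervalIntegral.integral_const_mul]
      have hc : (∫ y in x..b, Real.exp (-2 * y)) = (Real.exp (-2*x) - Real.exp (-2*b)) / 2 := by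
        rw [intervalIntegral.integral_comp_mul_left (fun u => Real.exp u) (by norm_num : (-2:ℝ) ≠ 0),
          integral_exp]
        simp [smul_eq_mul]; ring
      have ex : Real.exp (-2*x) = (Real.exp x)⁻¹ * (Real.exp x)⁻¹ := by
        rw [show (-2:ℝ)*x = -x + -x by ring, Real.exp_add, Real.exp_neg]
      have eb : Real.exp (-2*b) = (Real.exp b)⁻¹ * (Real.exp b)⁻¹ := by
        rw [show (-2:ℝ)*b = -b + -b by ring, Real.exp_add, Real.exp_neg]
      have exb : Real.exp (x - 2*b) = Real.exp x * ((Real.exp b)⁻¹ * (Real.exp b)⁻¹) := by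
        rw [show x - 2*b = x + (-b + -b) by ring, Real.exp_add, Real.exp_add, Real.exp_neg]
      rw [hc, ex, eb, exb, Real.exp_neg]
      field_simp
      ring
    · intro y hy
      simp only []
      rw [Set.uIcc_of_le hxb] at hy
      have h1 : |x - y| = y - x := by rw [abs_sub_comm]; exact abs_of_nonneg (by linarith [hy.1])
      have h2 : |y| = y := abs_of_nonneg (by linarith [hx, hy.1])
      rw [h1, h2, show -(y - x) = x + (-2*y) + y by ring, Real.exp_add, Real.exp_add,
        Real.exp_neg y]
      field_simp
      ring
  rw [← hsplit, h1, h2, abs_of_pos hx]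
  have e1 : Real.exp (x - 2 * b) = Real.exp (-x) * Real.exp (-2 * (b - x)) := by
    rw [← Real.exp_add]; ring_nf
  rw [e1]; ring
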